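/- arXiv:1804.02015 — 3 statements merged into one kernel-verified Lean document; each statement's English description precedes it below -/
import Mathlib

section
/- Let R be a commutative ring and g₁,…,g_t ∈ R. Let M = (m_{ij}) be an r×s matrix over R with r ≥ s such that: (1) each entry of M is either zero or one of g₁,…,g_t; (2) the i-th nonzero entry of each column (reading down) is g_i; (3) the last nonzero entry of each column is g_t; (4) if m_{ij} = g_q then m_{k,j+1} = g_q for some k > i. Then the ideal I_s(M) generated by the s×s minors of M equals (g₁,…,g_t)^s. -/
/-!
Every entry of `M` lies in `J = (g₁, …, g_t)`, hence every maximal minor lies in `J ^ s`.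
Conversely, for a product `g (q 1) ⋯ g (q s)` with `q` sorted, the rows `ρ j (q j)` increase
strictly, and the product is the diagonal term of the corresponding minor. Every other nonzero
term of that minor is a product `g (i 1) ⋯ g (i s)` where `i` agrees with `q ∘ σ` off the support
of the permutation `σ` and takes, at one moved column, a value below all values of `q` on the
support. Such an `i` is heavier for a weight favouring small indices, so induction on this weight
over the finitely many tuples puts every product into the ideal of minors.
-/

open Finset

namespace Matrix

variable {m n R : Type*} [Fintype n] [DecidableEq n] [CommRing R]

/-- The ideal `I_s(M)` of maximal minors of a matrix with `s` columns. -/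
def maxMinorIdeal (M : Matrix m n R) : Ideal R :=
  Ideal.span {x | ∃ f : n → m, Function.Injective f ∧ x = (M.submatrix f id).det}

theorem det_mem_pow_of_forall_mem {J : Ideal R} (A : Matrix n n R) (hA : ∀ i j, A i j ∈ J) :
    A.det ∈ J ^ Fintype.card n := by
  rw [det_apply']
  refine Ideal.sum_mem _ fun σ _ => Ideal.mul_mem_left _ _ ?_
  simpa [prod_const] using Ideal.prod_mem_prod (s := univ) (I := fun _ => J) fun j _ => hA (σ j) j

theorem maxMinorIdeal_le_pow_of_forall_mem {J : Ideal R} (M : Matrix m n R)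
    (hM : ∀ i j, M i j ∈ J) : M.maxMinorIdeal ≤ J ^ Fintype.card n := by
  rw [maxMinorIdeal, Ideal.span_le]
  rintro x ⟨f, -, rfl⟩
  exact det_mem_pow_of_forall_mem _ fun i j => hM (f i) j

theorem prod_diag_mem_of_det_mem {I : Ideal R} (A : Matrix n n R) (hdet : A.det ∈ I)
    (hoff : ∀ σ : Equiv.Perm n, σ ≠ 1 → ∏ j, A (σ j) j ∈ I) : ∏ j, A j j ∈ I := by
  rw [det_apply', ← add_sum_erase _ _ (mem_univ 1)] at hdet
  have hrest : ∑ σ ∈ univ.erase 1, ((Equiv.Perm.sign σ : ℤ) : R) * ∏ j, A (σ j) j ∈ I :=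
    Ideal.sum_mem _ fun σ hσ => Ideal.mul_mem_left _ _ (hoff σ (ne_of_mem_erase hσ))
  simpa using I.sub_mem hdet hrest

end Matrix

theorem Ideal.span_range_pow_le {ι R : Type*} [CommRing R] {I : Ideal R} (g : ι → R) (n : ℕ)
    (h : ∀ q : Fin n → ι, ∏ j, g (q j) ∈ I) : Ideal.span (Set.range g) ^ n ≤ I := by
  rw [Ideal.span, Submodule.span_pow, Submodule.span_le]
  intro x hx
  obtain ⟨f, rfl⟩ := Set.mem_pow.mp hx
  choose q hq using fun j => (f j).2
  simpa [List.prod_ofFn, hq] using h q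

theorem Fin.strictMono_of_lt_add_one {α : Type*} [Preorder α] {s : ℕ} {f : Fin s → α}
    (h : ∀ (j : Fin s) (hj : (j : ℕ) + 1 < s), f j < f ⟨j + 1, hj⟩) : StrictMono f := by
  cases s with
  | zero => exact fun j => j.elim0
  | succ s => exact Fin.strictMono_iff_lt_succ.2 fun j => h j.castSucc (by simp)

section TupleWeight

variable {ι : Type*} [Fintype ι] {t : ℕ}

/-- Weights are chosen so that a single entry `x` outweighs `Fintype.card ι` entries `> x`. -/
def tupleWeight (q : ι → Fin t) : ℕ :=
  ∑ j, (Fintype.card ι + 1) ^ ((q j).rev : ℕ)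

theorem tupleWeight_comp_equiv (q : ι → Fin t) (σ : ι ≃ ι) :
    tupleWeight (q ∘ σ) = tupleWeight q :=
  Equiv.sum_comp σ fun j => (Fintype.card ι + 1) ^ ((q j).rev : ℕ)

theorem tupleWeight_lt_of_eqOn_compl {p i : ι → Fin t} {A : Finset ι} {m : Fin t}
    (hp : ∀ j ∈ A, m ≤ p j) (heq : ∀ j ∉ A, p j = i j) {j₀ : ι} (hj₀ : j₀ ∈ A)
    (hi : i j₀ < m) : tupleWeight p < tupleWeight i := by
  classical
  set B := Fintype.card ι + 1
  have hB : 1 ≤ B := Nat.le_add_left 1 _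
  have hA : ∑ j ∈ A, B ^ ((p j).rev : ℕ) < ∑ j ∈ A, B ^ ((i j).rev : ℕ) :=
    calc ∑ j ∈ A, B ^ ((p j).rev : ℕ)
        ≤ #A • B ^ (m.rev : ℕ) :=
          sum_le_card_nsmul _ _ _ fun j hj => Nat.pow_le_pow_right hB (Fin.rev_le_rev.2 (hp j hj))
      _ ≤ Fintype.card ι * B ^ (m.rev : ℕ) := Nat.mul_le_mul_right _ (card_le_univ A)
      _ < B ^ ((m.rev : ℕ) + 1) := by
          rw [pow_succ']; exact Nat.mul_lt_mul_of_pos_right (Nat.lt_succ_self _) (by positivity)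
      _ ≤ B ^ ((i j₀).rev : ℕ) := Nat.pow_le_pow_right hB (Fin.rev_lt_rev.2 hi)
      _ ≤ ∑ j ∈ A, B ^ ((i j).rev : ℕ) :=
          single_le_sum (f := fun j => B ^ ((i j).rev : ℕ)) (fun _ _ => Nat.zero_le _) hj₀
  have hAc : ∑ j ∈ Aᶜ, B ^ ((p j).rev : ℕ) = ∑ j ∈ Aᶜ, B ^ ((i j).rev : ℕ) :=
    sum_congr rfl fun j hj => by rw [heq j (mem_compl.1 hj)]
  unfold tupleWeight
  rw [← sum_add_sum_compl A, ← sum_add_sum_compl A (fun j => B ^ ((i j).rev : ℕ)), hAc]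
  exact Nat.add_lt_add_right hA _

end TupleWeight

theorem tupleWeight_lt_of_perm {ι κ : Type*} [Fintype ι] [LinearOrder ι] [Preorder κ] {t : ℕ}
    {ρ : ι → Fin t → κ} (hrow : ∀ j, StrictMono (ρ j)) (hcol : ∀ x, StrictMono fun j => ρ j x)
    {q : ι → Fin t} (hq : Monotone q) {σ : Equiv.Perm ι} (hσ : σ ≠ 1) {i : ι → Fin t}
    (hi : ∀ j, ρ j (i j) = ρ (σ j) (q (σ j))) : tupleWeight q < tupleWeight i := by
  have hsupp : σ.support.Nonempty :=
    nonempty_iff_ne_empty.2 fun h => hσ (Equiv.Perm.support_eq_empty_iff.1 h)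
  set a := σ.support.min' hsupp
  have ha : a ∈ σ.support := min'_mem _ _
  have hj₀ : σ.symm a ∈ σ.support := by
    rwa [← Equiv.Perm.apply_mem_support, Equiv.apply_symm_apply]
  have ha_lt : a < σ.symm a := by
    refine (min'_le _ _ hj₀).lt_of_ne fun h => Equiv.Perm.mem_support.1 hj₀ ?_
    rw [Equiv.apply_symm_apply, ← h]
  -- the least moved column `a` is filled from the later column `σ.symm a`, where the
  -- staircase forces a value below `q a`
  rw [← tupleWeight_comp_equiv q σ]
  refine tupleWeight_lt_of_eqOn_compl (A := σ.support) (m := q a) (fun j hj => ?_)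
    (fun j hj => ?_) hj₀ ?_
  · exact hq (min'_le _ _ (Equiv.Perm.apply_mem_support.2 hj))
  · have hfix : σ j = j := Equiv.Perm.notMem_support.1 hj
    exact (hrow j).injective (by rw [hi j, hfix, Function.comp_apply, hfix])
  · have := hi (σ.symm a)
    rw [Equiv.apply_symm_apply] at this
    exact (hrow _).lt_iff_lt.1 (by rw [this]; exact hcol _ ha_lt)

structure IsStaircase {R : Type*} [CommRing R] {r s t : ℕ} (M : Matrix (Fin r) (Fin s) R)
    (g : Fin t → R) (ρ : Fin s → Fin t → Fin r) : Prop where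
  strictMono_row : ∀ j, StrictMono (ρ j)
  strictMono_col : ∀ x, StrictMono fun j => ρ j x
  apply_eq : ∀ j x, M (ρ j x) j = g x
  apply_eq_zero : ∀ j a, (∀ x, ρ j x ≠ a) → M a j = 0

namespace IsStaircase

variable {R : Type*} [CommRing R] {r s t : ℕ} {M : Matrix (Fin r) (Fin s) R} {g : Fin t → R}
  {ρ : Fin s → Fin t → Fin r}

theorem exists_eq_of_ne_zero (hM : IsStaircase M g ρ) {a : Fin r} {j : Fin s} (h : M a j ≠ 0) :
    ∃ x, ρ j x = a := by
  by_contra! hx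
  exact h (hM.apply_eq_zero j a hx)

theorem apply_mem_span (hM : IsStaircase M g ρ) (a : Fin r) (j : Fin s) :
    M a j ∈ Ideal.span (Set.range g) := by
  by_cases h : M a j = 0
  · rw [h]; exact zero_mem _
  · obtain ⟨x, rfl⟩ := hM.exists_eq_of_ne_zero h
    rw [hM.apply_eq]
    exact Ideal.subset_span ⟨x, rfl⟩

theorem prod_mem_maxMinorIdeal (hM : IsStaircase M g ρ) (q : Fin s → Fin t) :
    ∏ j, g (q j) ∈ M.maxMinorIdeal := by
  have hwf := @Finite.wellFounded_of_trans_of_irrefl (Fin s → Fin t) _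
    (fun p q => tupleWeight q < tupleWeight p) ⟨fun _ _ _ h₁ h₂ => h₂.trans h₁⟩ ⟨fun _ => lt_irrefl _⟩
  induction q using hwf.induction with
  | _ q ih =>
  set q' := q ∘ Tuple.sort q
  have hq' : Monotone q' := Tuple.monotone_sort q
  set f : Fin s → Fin r := fun j => ρ j (q' j)
  have hf : StrictMono f := fun j j' h =>
    (hM.strictMono_col _ h).trans_le ((hM.strictMono_row j').monotone (hq' h.le))
  have hdiag : ∏ j, g (q j) = ∏ j, M.submatrix f id j j :=
    (Equiv.prod_comp _ _).symm.trans (prod_congr rfl fun j _ => (hM.apply_eq j (q' j)).symm)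
  rw [hdiag]
  refine Matrix.prod_diag_mem_of_det_mem _ (Ideal.subset_span ⟨f, hf.injective, rfl⟩)
    fun σ hσ => ?_
  simp only [Matrix.submatrix_apply, id_eq]
  by_cases hz : ∃ j, M (f (σ j)) j = 0
  · obtain ⟨j, hj⟩ := hz
    rw [prod_eq_zero (f := fun k => M (f (σ k)) k) (mem_univ j) hj]
    exact zero_mem _
  · push Not at hz
    choose i hi using fun j => hM.exists_eq_of_ne_zero (hz j)
    have hprod : ∏ j, M (f (σ j)) j = ∏ j, g (i j) :=
      prod_congr rfl fun j _ => by rw [← hi j, hM.apply_eq]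
    rw [hprod]
    refine ih i ?_
    rw [← tupleWeight_comp_equiv q (Tuple.sort q)]
    exact tupleWeight_lt_of_perm hM.strictMono_row hM.strictMono_col hq' hσ hi

end IsStaircase

theorem staircase_maximal_minors_general {R : Type*} [CommRing R] (r s t : ℕ)
    (g : Fin t → R) (M : Matrix (Fin r) (Fin s) R)
    (ρ : Fin s → Fin t → Fin r)
    (hmono : ∀ j, StrictMono (ρ j))
    (hval : ∀ (j : Fin s) (i : Fin t), M (ρ j i) j = g i)
    (hzero : ∀ (j : Fin s) (a : Fin r), (∀ i : Fin t, ρ j i ≠ a) → M a j = 0)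
    (hstep : ∀ (j : Fin s) (hj : (j : ℕ) + 1 < s) (q : Fin t),
      ρ j q < ρ ⟨(j : ℕ) + 1, hj⟩ q) :
    Ideal.span {x : R | ∃ f : Fin s → Fin r,
        Function.Injective f ∧ x = (M.submatrix f id).det}
      = (Ideal.span (Set.range g)) ^ s := by
  have hM : IsStaircase M g ρ :=
    ⟨hmono, fun x => Fin.strictMono_of_lt_add_one fun j hj => hstep j hj x, hval, hzero⟩
  change M.maxMinorIdeal = _
  refine le_antisymm ?_ (Ideal.span_range_pow_le g s hM.prod_mem_maxMinorIdeal)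
  simpa using M.maxMinorIdeal_le_pow_of_forall_mem hM.apply_mem_span

/-- Let `M` be an `r × s` matrix (`r ≥ s`) over a commutative ring
whose column `j` has nonzero entries exactly at the positions `ρ j 0 < ⋯ < ρ j (t-1)`
with values `g 0, …, g (t-1)` (so the `i`-th nonzero entry of each column is `g i`
and the last one is `g (t-1)`), and such that each occurrence of `g q` in column `j`
is followed by an occurrence of `g q` strictly lower down in column `j+1`.
Then the ideal of `s × s` minors of `M` equals `(g 0, …, g (t-1))^s`. -/
theorem staircase_maximal_minors {R : Type*} [CommRing R] (r s t : ℕ) (hrs : s ≤ r)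
    (g : Fin t → R) (M : Matrix (Fin r) (Fin s) R)
    (ρ : Fin s → Fin t → Fin r)
    (hmono : ∀ j, StrictMono (ρ j))
    (hval : ∀ (j : Fin s) (i : Fin t), M (ρ j i) j = g i)
    (hzero : ∀ (j : Fin s) (a : Fin r), (∀ i : Fin t, ρ j i ≠ a) → M a j = 0)
    (hstep : ∀ (j : Fin s) (hj : (j : ℕ) + 1 < s) (q : Fin t),
      ρ j q < ρ ⟨(j : ℕ) + 1, hj⟩ q) :
    Ideal.span {x : R | ∃ f : Fin s → Fin r,
        Function.Injective f ∧ x = (M.submatrix f id).det}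
      = (Ideal.span (Set.range g)) ^ s :=
  staircase_maximal_minors_general r s t g M ρ hmono hval hzero hstep
end

section
/- Let x, y, z be elements in a commutative ring. The determinant of the n×n matrix whose superdiagonal entries are x, whose subdiagonal entries are y, whose (n,n) entry is z, and all other entries zero, equals (−1)^{n/2} x^{n/2} y^{n/2} if n is even, and equals (−1)^{(n−1)/2} x^{(n−1)/2} y^{(n−1)/2} z if n is odd. -/
/-!
Expanding along the first row and then along the first column peels off the leading
`2 × 2` block `!![0, x; y, 0]`, so the determinant of the size-`n + 2` matrix is `-x y` times
that of the size-`n` matrix of the same shape. Two steps of this recursion reach the base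
cases: the empty matrix, with determinant `1`, and the `1 × 1` matrix `!![z]`.
-/

open Matrix

section

variable {R : Type*} [CommRing R]

theorem Matrix.det_eq_neg_mul_det_submatrix_succ_succ {n : ℕ}
    (M : Matrix (Fin (n + 2)) (Fin (n + 2)) R)
    (hrow : ∀ j, j ≠ 1 → M 0 j = 0) (hcol : ∀ i, i ≠ 1 → M i 0 = 0) :
    M.det = -(M 0 1 * M 1 0) *
      (M.submatrix (Fin.succ ∘ Fin.succ) (Fin.succ ∘ Fin.succ)).det := by
  rw [det_succ_row_zero, Fintype.sum_eq_single 1 fun j hj => by rw [hrow j hj]; ring,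
    det_succ_column_zero, Fintype.sum_eq_single 0 fun i hi => by
      rw [submatrix_apply, Fin.one_succAbove_zero,
        hcol _ fun h => hi (Fin.succ_injective _ (h.trans Fin.succ_zero_eq_one.symm))]
      ring]
  simp only [submatrix_submatrix, submatrix_apply, Fin.one_succAbove_zero, Fin.succAbove_zero]
  have hcols : Fin.succAbove 1 ∘ Fin.succ = (Fin.succ ∘ Fin.succ : Fin n → Fin (n + 2)) :=
    funext Fin.one_succAbove_succ
  rw [hcols, Fin.succ_zero_eq_one, Fin.val_one, Fin.val_zero]
  ring

def cornerTridiagonal (x y z : R) (n : ℕ) : Matrix (Fin n) (Fin n) R :=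
  of fun i j =>
    if (i : ℕ) = n - 1 ∧ (j : ℕ) = n - 1 then z
    else if (i : ℕ) + 1 = (j : ℕ) then x
    else if (j : ℕ) + 1 = (i : ℕ) then y else 0

variable (x y z : R)

theorem cornerTridiagonal_submatrix_succ_succ (n : ℕ) :
    (cornerTridiagonal x y z (n + 2)).submatrix (Fin.succ ∘ Fin.succ) (Fin.succ ∘ Fin.succ) =
      cornerTridiagonal x y z n := by
  ext i j
  have hcorner : ((i : ℕ) + 1 + 1 = n + 2 - 1 ∧ (j : ℕ) + 1 + 1 = n + 2 - 1) ↔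
      ((i : ℕ) = n - 1 ∧ (j : ℕ) = n - 1) := by
    have := i.isLt
    omega
  simp only [cornerTridiagonal, submatrix_apply, of_apply, Function.comp_apply, Fin.val_succ,
    hcorner, add_left_inj]

theorem det_cornerTridiagonal_add_two (n : ℕ) :
    (cornerTridiagonal x y z (n + 2)).det = -(x * y) * (cornerTridiagonal x y z n).det := by
  rw [det_eq_neg_mul_det_submatrix_succ_succ, cornerTridiagonal_submatrix_succ_succ]
  · simp [cornerTridiagonal]
  all_goals
    intro k hk
    rw [Ne, Fin.ext_iff] at hk
    have := k.isLt
    simp only [cornerTridiagonal, of_apply, Fin.val_zero, Fin.val_one] at hk ⊢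
    grind

theorem det_cornerTridiagonal : ∀ n : ℕ, (cornerTridiagonal x y z n).det =
    if Even n then (-1 : R) ^ (n / 2) * x ^ (n / 2) * y ^ (n / 2)
    else (-1 : R) ^ ((n - 1) / 2) * x ^ ((n - 1) / 2) * y ^ ((n - 1) / 2) * z
  | 0 => by simp
  | 1 => by simp [cornerTridiagonal]
  | n + 2 => by
    rw [det_cornerTridiagonal_add_two, det_cornerTridiagonal n]
    by_cases hn : Even n
    · have hdiv : (n + 2) / 2 = n / 2 + 1 := by omega
      simp only [hn, Nat.even_add_one, not_not, if_true, hdiv]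
      ring
    · have hdiv : (n + 2 - 1) / 2 = (n - 1) / 2 + 1 := by
        obtain ⟨k, rfl⟩ := Nat.not_even_iff_odd.mp hn
        omega
      simp only [hn, Nat.even_add_one, not_not, if_false, hdiv]
      ring

end

/-- The determinant of the `n × n` matrix with superdiagonal
entries `x`, subdiagonal entries `y`, `(n,n)` entry `z` and all other entries zero
is `(-1)^(n/2) x^(n/2) y^(n/2)` if `n` is even, and
`(-1)^((n-1)/2) x^((n-1)/2) y^((n-1)/2) z` if `n` is odd. -/
theorem offdiag_det_with_corner {R : Type*} [CommRing R] (x y z : R) (n : ℕ)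
    (A : Matrix (Fin n) (Fin n) R)
    (hA : ∀ i j : Fin n, A i j =
      if (i : ℕ) = n - 1 ∧ (j : ℕ) = n - 1 then z
      else if (i : ℕ) + 1 = (j : ℕ) then x
      else if (j : ℕ) + 1 = (i : ℕ) then y else 0) :
    A.det = if Even n then (-1 : R) ^ (n / 2) * x ^ (n / 2) * y ^ (n / 2)
      else (-1 : R) ^ ((n - 1) / 2) * x ^ ((n - 1) / 2) * y ^ ((n - 1) / 2) * z := by
  have hA' : A = cornerTridiagonal x y z n := ext hA
  rw [hA', det_cornerTridiagonal]
end

section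
/- Let S be a Noetherian commutative ring, 0 → F_m →^{α_m} ⋯ → F₁ →^{α₁} F₀ a graded acyclic complex of finite free S-modules, r₁ = rank α₁, f₀ = rank F₀, and let a₁ : S(−s₁) → ∧^{r₁}F₀ be the Buchsbaum–Eisenbud multiplier. Fix an orientation η : ∧^{f₀}F₀ ≅ S. Then the composition α₁* ∘ η ∘ m_∧ ∘ (id ⊗ a₁) : ∧^{f₀−r₁−1}F₀ ⊗ S(−s₁) → F₀* → F₁* is zero; i.e., the image of η ∘ m_∧ ∘ (id ⊗ a₁) lies in ker α₁*. -/
/-- The `n`-th exterior power of `M`, as a submodule of the exterior algebra. -/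
noncomputable def extPow (S : Type*) [CommRing S] (M : Type*) [AddCommGroup M]
    [Module S M] (n : ℕ) : Submodule S (ExteriorAlgebra S M) :=
  (LinearMap.range (ExteriorAlgebra.ι S : M →ₗ[S] ExteriorAlgebra S M)) ^ n

/-- Let `0 → F_m → ⋯ → F₁ →^{α₁} F₀` be a graded acyclic
complex of finite free modules over a Noetherian ring `S`, `r₁ = rank α₁`,
`f₀ = rank F₀`, and `a₁ : S(−s₁) → ∧^{r₁}F₀` the Buchsbaum–Eisenbud multiplier,
with element `A = a₁(1) ∈ ∧^{r₁}F₀`; it satisfies `∧^{r₁}α₁ = a₁ ∘ a₂*`, where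
`I(a₂)` has positive grade (contains a nonzerodivisor), and `∧^{r₁+1}α₁ = 0`.
Fix an orientation `η` of `F₀` (a functional restricting to an isomorphism
`∧^{f₀}F₀ ≅ S`).  Then the composition
`α₁* ∘ η ∘ m_∧ ∘ (id ⊗ a₁) : ∧^{f₀−r₁−1}F₀ ⊗ S(−s₁) → F₀* → F₁*` is zero:
for every `ω ∈ ∧^{f₀−r₁−1}F₀` and every `u ∈ F₁`, `η(ω ∧ A ∧ α₁(u)) = 0`. -/
theorem image_of_multiplier_in_kernel {S : Type*} [CommRing S] [IsNoetherianRing S]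
    (f₀ f₁ r₁ : ℕ) (hr : r₁ + 1 ≤ f₀)
    (α₁ : (Fin f₁ → S) →ₗ[S] (Fin f₀ → S))
    (A : ExteriorAlgebra S (Fin f₀ → S)) (hA : A ∈ extPow S (Fin f₀ → S) r₁)
    (a₂d : ExteriorAlgebra S (Fin f₁ → S) →ₗ[S] S)
    (hfact : ∀ ξ ∈ extPow S (Fin f₁ → S) r₁, ExteriorAlgebra.map α₁ ξ = a₂d ξ • A)
    (hrank : ∀ ξ ∈ extPow S (Fin f₁ → S) (r₁ + 1), ExteriorAlgebra.map α₁ ξ = 0)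
    (hgrade : ∃ ξ ∈ extPow S (Fin f₁ → S) r₁, a₂d ξ ∈ nonZeroDivisors S)
    (η : ExteriorAlgebra S (Fin f₀ → S) →ₗ[S] S)
    (horient : Function.Bijective (η.domRestrict (extPow S (Fin f₀ → S) f₀))) :
    ∀ ω ∈ extPow S (Fin f₀ → S) (f₀ - r₁ - 1), ∀ u : Fin f₁ → S,
      η (ω * A * ExteriorAlgebra.ι S (α₁ u)) = 0 := by
  intro ω hω u
  obtain ⟨ξ, hξ, hc⟩ := hgrade
  -- ξ * ι u lies in the (r₁+1)-st exterior power
  have hmem : ξ * ExteriorAlgebra.ι S u ∈ extPow S (Fin f₁ → S) (r₁ + 1) := by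
    rw [extPow, pow_succ]
    exact Submodule.mul_mem_mul hξ ⟨u, rfl⟩
  have hzero : (ExteriorAlgebra.map α₁) (ξ * ExteriorAlgebra.ι S u) = 0 :=
    hrank _ hmem
  have hmul : (ExteriorAlgebra.map α₁) (ξ * ExteriorAlgebra.ι S u)
      = a₂d ξ • (A * ExteriorAlgebra.ι S (α₁ u)) := by
    rw [map_mul, hfact ξ hξ, ExteriorAlgebra.map_apply_ι, smul_mul_assoc]
  have key : a₂d ξ • (A * ExteriorAlgebra.ι S (α₁ u)) = 0 := by
    rw [← hmul, hzero]
  have : a₂d ξ * η (ω * A * ExteriorAlgebra.ι S (α₁ u)) = 0 := by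
    rw [← smul_eq_mul, ← map_smul, mul_assoc, ← mul_smul_comm, key, mul_zero,
      map_zero]
  exact hc.2 _ (by rwa [mul_comm])
end
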